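/- In the regular unit hexagon graph H (center plus six vertices of a unit hexagon), for every proper 4-coloring, any monochromatic triple of vertices (three distinct vertices of the same color) forms an equilateral triangle of side √3. -/

import Mathlib

/-!
The centre is adjacent to every other vertex, so it is alone in its colour class, and a
monochromatic triple is an independent set of three vertices of the rim 6-cycle. Such a set
consists of every second vertex, and rim vertices two steps apart are at distance
`√(2 - 2 cos (2π/3)) = √3`.
-/

/-- The vertices of the graph `H`: `hexPts 0` is the center `(0,0)` and
`hexPts (k+1)`, `k = 0,…,5`, are the vertices `(cos(kπ/3), sin(kπ/3))` of a
regular hexagon of side length 1. -/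
noncomputable def hexPts (i : Fin 7) : EuclideanSpace ℝ (Fin 2) :=
  if i = 0 then (WithLp.equiv 2 (Fin 2 → ℝ)).symm ![0, 0]
  else (WithLp.equiv 2 (Fin 2 → ℝ)).symm
    ![Real.cos ((i.val - 1 : ℕ) * (Real.pi / 3)), Real.sin ((i.val - 1 : ℕ) * (Real.pi / 3))]

open Real

lemma dist_zero_cos_sin (θ : ℝ) :
    dist ((WithLp.equiv 2 (Fin 2 → ℝ)).symm ![0, 0])
      ((WithLp.equiv 2 (Fin 2 → ℝ)).symm ![cos θ, sin θ]) = 1 := by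
  simp [EuclideanSpace.dist_eq, Fin.sum_univ_two]

lemma dist_cos_sin_cos_sin (α β : ℝ) :
    dist ((WithLp.equiv 2 (Fin 2 → ℝ)).symm ![cos α, sin α])
      ((WithLp.equiv 2 (Fin 2 → ℝ)).symm ![cos β, sin β]) = √(2 - 2 * cos (α - β)) := by
  simp only [EuclideanSpace.dist_eq, Fin.sum_univ_two, Real.dist_eq, sq_abs,
    WithLp.equiv_symm_apply, Matrix.cons_val_zero, Matrix.cons_val_one, Matrix.cons_val_fin_one]
  rw [cos_sub]
  congr 1
  nlinarith [sin_sq_add_cos_sq α, sin_sq_add_cos_sq β]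

lemma cos_int_mul_pi_div_three_emod_six (n : ℤ) :
    cos (n * (π / 3)) = cos ((n % 6 : ℤ) * (π / 3)) := by
  conv_lhs => rw [← Int.emod_add_mul_ediv n 6]
  push_cast
  rw [show ((n % 6 : ℤ) + 6 * (n / 6 : ℤ) : ℝ) * (π / 3) =
      (n % 6 : ℤ) * (π / 3) + (n / 6 : ℤ) * (2 * π) by ring]
  exact cos_add_int_mul_two_pi _ _

lemma cos_int_mul_pi_div_three_eq_half {n : ℤ} (h : n % 6 = 1 ∨ n % 6 = 5) :
    cos (n * (π / 3)) = 1 / 2 := by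
  rw [cos_int_mul_pi_div_three_emod_six]
  rcases h with h | h <;> rw [h]
  · simp
  · rw [show ((5 : ℤ) : ℝ) * (π / 3) = -(π / 3) + (1 : ℤ) * (2 * π) by push_cast; ring,
      cos_add_int_mul_two_pi, cos_neg, cos_pi_div_three]

lemma cos_int_mul_pi_div_three_eq_neg_half {n : ℤ} (h : n % 6 = 2 ∨ n % 6 = 4) :
    cos (n * (π / 3)) = -(1 / 2) := by
  rw [cos_int_mul_pi_div_three_emod_six]
  rcases h with h | h <;> rw [h]
  · rw [show ((2 : ℤ) : ℝ) * (π / 3) = π - π / 3 by push_cast; ring, cos_pi_sub, cos_pi_div_three]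
  · rw [show ((4 : ℤ) : ℝ) * (π / 3) = π / 3 + π by push_cast; ring, cos_add_pi, cos_pi_div_three]

lemma hexPts_of_ne_zero {i : Fin 7} (hi : i ≠ 0) :
    hexPts i = (WithLp.equiv 2 (Fin 2 → ℝ)).symm
      ![cos (((i : ℤ) - 1 : ℤ) * (π / 3)), sin (((i : ℤ) - 1 : ℤ) * (π / 3))] := by
  have hi' : 1 ≤ (i : ℕ) := Nat.one_le_iff_ne_zero.mpr (Fin.val_ne_zero_iff.mpr hi)
  simp [hexPts, hi, Nat.cast_sub hi']

lemma dist_hexPts_zero {j : Fin 7} (hj : j ≠ 0) : dist (hexPts 0) (hexPts j) = 1 := by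
  rw [hexPts_of_ne_zero hj]
  exact dist_zero_cos_sin _

lemma dist_hexPts_of_ne_zero {i j : Fin 7} (hi : i ≠ 0) (hj : j ≠ 0) :
    dist (hexPts i) (hexPts j) = √(2 - 2 * cos (((i : ℤ) - j : ℤ) * (π / 3))) := by
  rw [hexPts_of_ne_zero hi, hexPts_of_ne_zero hj, dist_cos_sin_cos_sin]
  push_cast
  ring_nf

/-- The edges of `H`: the spokes from the centre `0`, and the rim edges between vertices
whose labels differ by `±1` modulo `6`. -/
def HexAdj (i j : Fin 7) : Prop :=
  i = 0 ∧ j ≠ 0 ∨ i ≠ 0 ∧ j = 0 ∨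
    i ≠ 0 ∧ j ≠ 0 ∧ (((i : ℤ) - j) % 6 = 1 ∨ ((i : ℤ) - j) % 6 = 5)

def HexSecondNeighbor (i j : Fin 7) : Prop :=
  i ≠ 0 ∧ j ≠ 0 ∧ (((i : ℤ) - j) % 6 = 2 ∨ ((i : ℤ) - j) % 6 = 4)

instance : DecidableRel HexAdj := fun _ _ => by unfold HexAdj; infer_instance

instance : DecidableRel HexSecondNeighbor := fun _ _ => by
  unfold HexSecondNeighbor; infer_instance

lemma dist_hexPts_of_hexAdj {i j : Fin 7} (h : HexAdj i j) : dist (hexPts i) (hexPts j) = 1 := by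
  obtain ⟨rfl, hj⟩ | ⟨hi, rfl⟩ | ⟨hi, hj, hr⟩ := h
  · exact dist_hexPts_zero hj
  · rw [dist_comm]
    exact dist_hexPts_zero hi
  · rw [dist_hexPts_of_ne_zero hi hj, cos_int_mul_pi_div_three_eq_half hr]
    norm_num

lemma dist_hexPts_of_hexSecondNeighbor {i j : Fin 7} (h : HexSecondNeighbor i j) :
    dist (hexPts i) (hexPts j) = √3 := by
  obtain ⟨hi, hj, hr⟩ := h
  rw [dist_hexPts_of_ne_zero hi hj, cos_int_mul_pi_div_three_eq_neg_half hr]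
  norm_num

lemma hexSecondNeighbor_of_pairwise_not_hexAdj :
    ∀ i j k : Fin 7, i ≠ j → i ≠ k → j ≠ k → ¬HexAdj i j → ¬HexAdj j k → ¬HexAdj i k →
      HexSecondNeighbor i j ∧ HexSecondNeighbor j k ∧ HexSecondNeighbor i k := by
  decide

/-- In the hexagon graph `H`, for every proper 4-coloring, any monochromatic triple of
vertices (three distinct vertices of the same color) forms an equilateral triangle of
side √3. -/
theorem hexagon_monochromatic_triple_is_sqrt3_triangle
    (c : Fin 7 → Fin 4)
    (hc : ∀ i j : Fin 7, dist (hexPts i) (hexPts j) = 1 → c i ≠ c j)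
    (i j k : Fin 7) (hij : i ≠ j) (hik : i ≠ k) (hjk : j ≠ k)
    (hcij : c i = c j) (hcjk : c j = c k) :
    dist (hexPts i) (hexPts j) = Real.sqrt 3 ∧
    dist (hexPts j) (hexPts k) = Real.sqrt 3 ∧
    dist (hexPts i) (hexPts k) = Real.sqrt 3 := by
  have not_adj {a b : Fin 7} (hab : c a = c b) : ¬HexAdj a b := fun h =>
    hc a b (dist_hexPts_of_hexAdj h) hab
  obtain ⟨h₁, h₂, h₃⟩ := hexSecondNeighbor_of_pairwise_not_hexAdj i j k hij hik hjk
    (not_adj hcij) (not_adj hcjk) (not_adj (hcij.trans hcjk))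
  exact ⟨dist_hexPts_of_hexSecondNeighbor h₁, dist_hexPts_of_hexSecondNeighbor h₂,
    dist_hexPts_of_hexSecondNeighbor h₃⟩
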